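/- Let ν ∈ ℝ³ (regarded as an element of ℂ³), let A₋, A₊, E_T ∈ ℂ³, let κ ≠ 0 and Z > 0 be real, and let η ∈ ℂ with 2/Z + η ≠ 0. Define χ₋ = −ν × A₋ + (iκ/Z)E_T and χ₊ = ν × A₊ + (iκ/Z)E_T, and assume ν × (A₊ − A₋) = iκη·E_T. Then the outgoing flux on the K₋ side can be written in terms of the UWVF unknowns as ν × A₋ + (iκ/Z)E_T = χ₊ − (η/(2/Z + η))·(χ₋ + χ₊). (This identity gives the modification of the UWVF system matrix that implements a resistive sheet across an interior face.) -/

import Mathlib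

open Complex

/-- The cross product on `ℂ³`. -/
def cross3 (u v : Fin 3 → ℂ) : Fin 3 → ℂ :=
  ![u 1 * v 2 - u 2 * v 1, u 2 * v 0 - u 0 * v 2, u 0 * v 1 - u 1 * v 0]

/-- The identity giving the resistive-sheet modification of the UWVF system matrix:
the outgoing flux on the `K₋` side equals `χ₊ − (η/(2/Z + η))·(χ₋ + χ₊)`. -/
theorem resistive_sheet_flux_identity
    (ν : Fin 3 → ℝ) (Am Ap ET : Fin 3 → ℂ) (κ Z : ℝ) (hκ : κ ≠ 0) (hZ : 0 < Z)
    (η : ℂ) (hη : 2 / (Z : ℂ) + η ≠ 0)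
    (χm χp : Fin 3 → ℂ)
    (hχm : χm = -cross3 (fun j => (ν j : ℂ)) Am + ((I * κ) / Z) • ET)
    (hχp : χp = cross3 (fun j => (ν j : ℂ)) Ap + ((I * κ) / Z) • ET)
    (hsheet : cross3 (fun j => (ν j : ℂ)) (Ap - Am) = (I * κ * η) • ET) :
    cross3 (fun j => (ν j : ℂ)) Am + ((I * κ) / Z) • ET
      = χp - (η / (2 / Z + η)) • (χm + χp) := by
  have hZ' : (Z : ℂ) ≠ 0 := by exact_mod_cast hZ.ne'
  set N : Fin 3 → ℂ := fun j => (ν j : ℂ) with hN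
  have hlin : cross3 N (Ap - Am) = cross3 N Ap - cross3 N Am := by
    funext i
    fin_cases i <;> simp [cross3] <;> ring
  have hsum : χm + χp = (I * κ * (2 / Z + η)) • ET := by
    funext i
    have h := congrFun hsheet i
    rw [hlin] at h
    simp only [Pi.smul_apply, smul_eq_mul, Pi.sub_apply] at h
    simp only [hχm, hχp, Pi.add_apply, Pi.neg_apply, Pi.smul_apply, smul_eq_mul]
    field_simp
    linear_combination (Z : ℂ) * h
  have hD : η * (Z : ℂ) ^ 2 + (Z : ℂ) * 2 ≠ 0 := by
    have he : η * (Z : ℂ) ^ 2 + (Z : ℂ) * 2 = (Z : ℂ) ^ 2 * (2 / Z + η) := by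
      field_simp; ring
    rw [he]
    exact mul_ne_zero (pow_ne_zero _ hZ') hη
  have hkey : (η / (2 / Z + η)) • (χm + χp) = (I * κ * η) • ET := by
    rw [hsum, smul_smul]
    congr 1
    field_simp [hD]
    rw [mul_right_comm, mul_div_cancel_right₀ _ (by intro h0; apply hD; linear_combination (Z : ℂ) * h0)]
  rw [hkey, ← hsheet, hlin, hχp]
  module
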